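/- arXiv:2102.04282 — 2 statements merged into one kernel-verified Lean document; each statement's English description precedes it below -/
import Mathlib

section
/- Let ε1, ε2 ∈ (0,1), k ≥ 1, Δ_D, Δ_QT ≥ 0, let P ⊂ ℝ^d be finite nonempty with |P| = n, and let X, X* ⊂ ℝ^d with |X| = |X*| = k. Suppose: (i) a triple (S,Δ,w), with S ⊂ ℝ^d finite nonempty, w : S → [0,∞) with Σ_{q∈S} w(q) = n, and Δ ∈ ℝ, satisfies (1−ε2)·cost(P,Y) ≤ cost((S,Δ,w),Y) ≤ (1+ε2)·cost(P,Y) for every Y ⊂ ℝ^d with |Y| = k; (ii) a map π1 : ℝ^d → ℝ^{d'} satisfies (1/(1+ε1)²)·cost((S,Δ,w),X) ≤ cost((π1(S),Δ,w),π1(X)) ≤ (1+ε1)²·cost((S,Δ,w),X), and likewise with X* in place of X; (iii) Γ : S → ℝ^{d'} satisfies ‖π1(q) − Γ(q)‖ ≤ Δ_QT for every q ∈ S, and ‖π1(q)−y‖ ≤ Δ_D and ‖Γ(q)−y‖ ≤ Δ_D for every q ∈ S and every y ∈ π1(X) ∪ π1(X*); (iv) X' := π1(X) satisfies cost((Γ(S),Δ,w),X')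 ≤ cost((Γ(S),Δ,w),Y) for every finite nonempty Y ⊂ ℝ^{d'} with |Y| ≤ k. Then cost(P,X) ≤ ((1+ε1)^4·(1+ε2)/(1−ε2))·cost(P,X*) + ((1+ε1)²/(1−ε2))·4·n·Δ_D·Δ_QT. (Theorem 13, part 2: the quantization-added CR+DR algorithm, conditioned on the coreset and JL events.) -/
open scoped BigOperators

abbrev Pt (d : ℕ) : Type := EuclideanSpace ℝ (Fin d)

/-- Per-point k-means cost: `min_{y ∈ Y} ‖p - y‖²`. -/
noncomputable def ptCost {F : Type*} [NormedAddCommGroup F] (p : F) (Y : Set F) : ℝ :=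
  sInf ((fun y => ‖p - y‖ ^ 2) '' Y)

/-- Projected k-means cost: `∑_{p ∈ P} min_{y ∈ Y} ‖π(p) - y‖²` (sum indexed by points of `P`). -/
noncomputable def projCost {E F : Type*} [NormedAddCommGroup F]
    (π : E → F) (P : Finset E) (Y : Set F) : ℝ :=
  ∑ p ∈ P, ptCost (π p) Y

/-- k-means cost: `∑_{p ∈ P} min_{x ∈ X} ‖p - x‖²`. -/
noncomputable def kmeansCost {F : Type*} [NormedAddCommGroup F]
    (P : Finset F) (X : Set F) : ℝ :=
  ∑ p ∈ P, ptCost p X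

/-- Coreset cost (possibly after applying a map `π` to the coreset points):
`∑_{q ∈ S} w(q) · min_{y ∈ Y} ‖π(q) - y‖² + Δ`. -/
noncomputable def coresetCost {E F : Type*} [NormedAddCommGroup F]
    (S : Finset E) (Δ : ℝ) (w : E → ℝ) (π : E → F) (Y : Set F) : ℝ :=
  (∑ q ∈ S, w q * ptCost (π q) Y) + Δ

/-!
Chain the guarantees: the coreset property moves `cost(P, X)` to the coreset, the JL property
to the projected coreset `π1(S)`, and replacing `π1(S)` by its quantization `Γ(S)` costs at most
`2 n ΔD ΔQT`, since every point moves by at most `ΔQT` within distance `ΔD` of the centres.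
Optimality of `π1(X)` for `Γ(S)` compares it with `π1(X*)`, and the same steps run backwards
bring `π1(X*)` back to `cost(P, X*)`; the two quantization steps give `4 n ΔD ΔQT`.
-/

section ptCost

variable {F : Type*} [NormedAddCommGroup F] {Y : Set F}

lemma ptCost_le_norm_sub_sq (p : F) {y : F} (hy : y ∈ Y) : ptCost p Y ≤ ‖p - y‖ ^ 2 :=
  csInf_le ⟨0, by rintro _ ⟨z, -, rfl⟩; positivity⟩ ⟨y, hy, rfl⟩

lemma exists_mem_ptCost_eq (p : F) (hY : Y.Finite) (hne : Y.Nonempty) :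
    ∃ y ∈ Y, ptCost p Y = ‖p - y‖ ^ 2 := by
  obtain ⟨y, hy, hyeq⟩ := (hne.image _).csInf_mem (hY.image fun y => ‖p - y‖ ^ 2)
  exact ⟨y, hy, hyeq.symm⟩

/- At the centre `y` nearest to `b`,
`‖a - y‖² - ‖b - y‖² = (‖a - y‖ - ‖b - y‖)(‖a - y‖ + ‖b - y‖) ≤ ‖a - b‖ · 2D`. -/
lemma ptCost_le_ptCost_add_of_norm_sub_le {a b : F} (hY : Y.Finite) (hne : Y.Nonempty)
    {D Q : ℝ} (hab : ‖a - b‖ ≤ Q) (ha : ∀ y ∈ Y, ‖a - y‖ ≤ D) (hb : ∀ y ∈ Y, ‖b - y‖ ≤ D) :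
    ptCost a Y ≤ ptCost b Y + 2 * D * Q := by
  obtain ⟨y, hy, hby⟩ := exists_mem_ptCost_eq b hY hne
  have htri : ‖a - y‖ - ‖b - y‖ ≤ ‖a - b‖ := by
    linarith [norm_sub_le_norm_sub_add_norm_sub a b y]
  have hsum : ‖a - y‖ + ‖b - y‖ ≤ 2 * D := by linarith [ha y hy, hb y hy]
  calc ptCost a Y ≤ ‖a - y‖ ^ 2 := ptCost_le_norm_sub_sq a hy
    _ = ‖b - y‖ ^ 2 + (‖a - y‖ - ‖b - y‖) * (‖a - y‖ + ‖b - y‖) := by ring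
    _ ≤ ‖b - y‖ ^ 2 + Q * (2 * D) := by
      gcongr ‖b - y‖ ^ 2 + ?_
      exact mul_le_mul (htri.trans hab) hsum (by positivity) ((norm_nonneg _).trans hab)
    _ = ptCost b Y + 2 * D * Q := by rw [hby]; ring

end ptCost

lemma coresetCost_le_coresetCost_add {E F : Type*} [NormedAddCommGroup F] {S : Finset E}
    {w : E → ℝ} (hw : ∀ q ∈ S, 0 ≤ w q) (Δ : ℝ) {f g : E → F} {Y : Set F} {c : ℝ}
    (hfg : ∀ q ∈ S, ptCost (f q) Y ≤ ptCost (g q) Y + c) :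
    coresetCost S Δ w f Y ≤ coresetCost S Δ w g Y + (∑ q ∈ S, w q) * c := by
  have hsum : ∑ q ∈ S, w q * ptCost (f q) Y ≤ ∑ q ∈ S, (w q * ptCost (g q) Y + w q * c) :=
    Finset.sum_le_sum fun q hq => by
      rw [← mul_add]; exact mul_le_mul_of_nonneg_left (hfg q hq) (hw q hq)
  rw [Finset.sum_add_distrib, ← Finset.sum_mul] at hsum
  unfold coresetCost
  linarith

lemma coresetCost_le_coresetCost_add_of_norm_sub_le {E F : Type*} [NormedAddCommGroup F]
    {S : Finset E} {w : E → ℝ} (hw : ∀ q ∈ S, 0 ≤ w q) (Δ : ℝ) {f g : E → F} {Y : Set F}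
    (hY : Y.Finite) (hne : Y.Nonempty) {D Q : ℝ} (hfg : ∀ q ∈ S, ‖f q - g q‖ ≤ Q)
    (hf : ∀ q ∈ S, ∀ y ∈ Y, ‖f q - y‖ ≤ D) (hg : ∀ q ∈ S, ∀ y ∈ Y, ‖g q - y‖ ≤ D) :
    coresetCost S Δ w f Y ≤ coresetCost S Δ w g Y + (∑ q ∈ S, w q) * (2 * D * Q) :=
  coresetCost_le_coresetCost_add hw Δ fun q hq =>
    ptCost_le_ptCost_add_of_norm_sub_le hY hne (hfg q hq) (hf q hq) (hg q hq)

theorem stmt12_general {d d' k n : ℕ} (hk : 1 ≤ k) {ε1 ε2 : ℝ}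
    (hε10 : 0 < ε1) (hε21 : ε2 < 1)
    (ΔD ΔQT : ℝ)
    (P : Finset (Pt d))
    (X Xstar : Finset (Pt d)) (hX : X.card = k) (hXstar : Xstar.card = k)
    (S : Finset (Pt d)) (w : Pt d → ℝ) (Δ : ℝ)
    (hw : ∀ q ∈ S, 0 ≤ w q) (hwsum : (∑ q ∈ S, w q) = (n : ℝ))
    (hcore : ∀ Y : Finset (Pt d), Y.card = k →
      (1 - ε2) * kmeansCost P (Y : Set (Pt d)) ≤ coresetCost S Δ w id (Y : Set (Pt d)) ∧
      coresetCost S Δ w id (Y : Set (Pt d)) ≤ (1 + ε2) * kmeansCost P (Y : Set (Pt d)))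
    (π1 : Pt d → Pt d')
    (hJLX : (1 / (1 + ε1) ^ 2) * coresetCost S Δ w id (X : Set (Pt d)) ≤
        coresetCost S Δ w π1 (π1 '' (X : Set (Pt d))) ∧
      coresetCost S Δ w π1 (π1 '' (X : Set (Pt d))) ≤
        (1 + ε1) ^ 2 * coresetCost S Δ w id (X : Set (Pt d)))
    (hJLXstar : (1 / (1 + ε1) ^ 2) * coresetCost S Δ w id (Xstar : Set (Pt d)) ≤
        coresetCost S Δ w π1 (π1 '' (Xstar : Set (Pt d))) ∧
      coresetCost S Δ w π1 (π1 '' (Xstar : Set (Pt d))) ≤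
        (1 + ε1) ^ 2 * coresetCost S Δ w id (Xstar : Set (Pt d)))
    (Γ : Pt d → Pt d')
    (hΓ : ∀ q ∈ S, ‖π1 q - Γ q‖ ≤ ΔQT)
    (hdiam : ∀ q ∈ S, ∀ y ∈ (π1 '' (X : Set (Pt d)) ∪ π1 '' (Xstar : Set (Pt d))),
      ‖π1 q - y‖ ≤ ΔD ∧ ‖Γ q - y‖ ≤ ΔD)
    (hopt : ∀ Y : Finset (Pt d'), Y.Nonempty → Y.card ≤ k →
      coresetCost S Δ w Γ (π1 '' (X : Set (Pt d))) ≤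
        coresetCost S Δ w Γ (Y : Set (Pt d'))) :
    kmeansCost P (X : Set (Pt d)) ≤
      ((1 + ε1) ^ 4 * (1 + ε2) / (1 - ε2)) * kmeansCost P (Xstar : Set (Pt d)) +
        ((1 + ε1) ^ 2 / (1 - ε2)) * (4 * (n : ℝ) * ΔD * ΔQT) := by
  have hXne : X.Nonempty := Finset.card_pos.mp (by omega)
  have hXstarne : Xstar.Nonempty := Finset.card_pos.mp (by omega)
  set Y := π1 '' (X : Set (Pt d))
  set Ystar := π1 '' (Xstar : Set (Pt d))
  have hJL : coresetCost S Δ w id X ≤ (1 + ε1) ^ 2 * coresetCost S Δ w π1 Y := by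
    rw [← inv_mul_le_iff₀ (by positivity), ← one_div]
    exact hJLX.1
  have hquantY : coresetCost S Δ w π1 Y ≤ coresetCost S Δ w Γ Y + n * (2 * ΔD * ΔQT) :=
    hwsum ▸ coresetCost_le_coresetCost_add_of_norm_sub_le hw Δ (X.finite_toSet.image π1)
      (hXne.to_set.image π1) hΓ (fun q hq y hy => (hdiam q hq y (.inl hy)).1)
      (fun q hq y hy => (hdiam q hq y (.inl hy)).2)
  have hquantYstar : coresetCost S Δ w Γ Ystar ≤
      coresetCost S Δ w π1 Ystar + n * (2 * ΔD * ΔQT) :=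
    hwsum ▸ coresetCost_le_coresetCost_add_of_norm_sub_le hw Δ (Xstar.finite_toSet.image π1)
      (hXstarne.to_set.image π1) (fun q hq => norm_sub_rev (π1 q) (Γ q) ▸ hΓ q hq)
      (fun q hq y hy => (hdiam q hq y (.inr hy)).2)
      (fun q hq y hy => (hdiam q hq y (.inr hy)).1)
  have hoptYstar : coresetCost S Δ w Γ Y ≤ coresetCost S Δ w Γ Ystar := by
    simpa using hopt (Xstar.image π1) (hXstarne.image π1) (Finset.card_image_le.trans hXstar.le)
  have hchain : (1 - ε2) * kmeansCost P X ≤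
      (1 + ε1) ^ 4 * (1 + ε2) * kmeansCost P Xstar + (1 + ε1) ^ 2 * (4 * n * ΔD * ΔQT) :=
    calc (1 - ε2) * kmeansCost P X ≤ coresetCost S Δ w id X := (hcore X hX).1
      _ ≤ (1 + ε1) ^ 2 * coresetCost S Δ w π1 Y := hJL
      _ ≤ (1 + ε1) ^ 2 * (coresetCost S Δ w π1 Ystar + 4 * n * ΔD * ΔQT) := by
        gcongr; linarith
      _ ≤ (1 + ε1) ^ 2 * ((1 + ε1) ^ 2 * coresetCost S Δ w id Xstar + 4 * n * ΔD * ΔQT) := by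
        gcongr; exact hJLXstar.2
      _ ≤ (1 + ε1) ^ 2 * ((1 + ε1) ^ 2 * ((1 + ε2) * kmeansCost P Xstar) +
          4 * n * ΔD * ΔQT) := by
        gcongr; exact (hcore Xstar hXstar).2
      _ = _ := by ring
  rw [div_mul_eq_mul_div, div_mul_eq_mul_div, ← add_div, le_div_iff₀ (by linarith)]
  linarith

theorem stmt12 {d d' k n : ℕ} (hk : 1 ≤ k) {ε1 ε2 : ℝ}
    (hε10 : 0 < ε1) (hε11 : ε1 < 1) (hε20 : 0 < ε2) (hε21 : ε2 < 1)
    (ΔD ΔQT : ℝ) (hΔD : 0 ≤ ΔD) (hΔQT : 0 ≤ ΔQT)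
    (P : Finset (Pt d)) (hP : P.Nonempty) (hn : P.card = n)
    (X Xstar : Finset (Pt d)) (hX : X.card = k) (hXstar : Xstar.card = k)
    (S : Finset (Pt d)) (hS : S.Nonempty) (w : Pt d → ℝ) (Δ : ℝ)
    (hw : ∀ q ∈ S, 0 ≤ w q) (hwsum : (∑ q ∈ S, w q) = (n : ℝ))
    (hcore : ∀ Y : Finset (Pt d), Y.card = k →
      (1 - ε2) * kmeansCost P (Y : Set (Pt d)) ≤ coresetCost S Δ w id (Y : Set (Pt d)) ∧
      coresetCost S Δ w id (Y : Set (Pt d)) ≤ (1 + ε2) * kmeansCost P (Y : Set (Pt d)))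
    (π1 : Pt d → Pt d')
    (hJLX : (1 / (1 + ε1) ^ 2) * coresetCost S Δ w id (X : Set (Pt d)) ≤
        coresetCost S Δ w π1 (π1 '' (X : Set (Pt d))) ∧
      coresetCost S Δ w π1 (π1 '' (X : Set (Pt d))) ≤
        (1 + ε1) ^ 2 * coresetCost S Δ w id (X : Set (Pt d)))
    (hJLXstar : (1 / (1 + ε1) ^ 2) * coresetCost S Δ w id (Xstar : Set (Pt d)) ≤
        coresetCost S Δ w π1 (π1 '' (Xstar : Set (Pt d))) ∧
      coresetCost S Δ w π1 (π1 '' (Xstar : Set (Pt d))) ≤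
        (1 + ε1) ^ 2 * coresetCost S Δ w id (Xstar : Set (Pt d)))
    (Γ : Pt d → Pt d')
    (hΓ : ∀ q ∈ S, ‖π1 q - Γ q‖ ≤ ΔQT)
    (hdiam : ∀ q ∈ S, ∀ y ∈ (π1 '' (X : Set (Pt d)) ∪ π1 '' (Xstar : Set (Pt d))),
      ‖π1 q - y‖ ≤ ΔD ∧ ‖Γ q - y‖ ≤ ΔD)
    (hopt : ∀ Y : Finset (Pt d'), Y.Nonempty → Y.card ≤ k →
      coresetCost S Δ w Γ (π1 '' (X : Set (Pt d))) ≤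
        coresetCost S Δ w Γ (Y : Set (Pt d'))) :
    kmeansCost P (X : Set (Pt d)) ≤
      ((1 + ε1) ^ 4 * (1 + ε2) / (1 - ε2)) * kmeansCost P (Xstar : Set (Pt d)) +
        ((1 + ε1) ^ 2 / (1 - ε2)) * (4 * (n : ℝ) * ΔD * ΔQT) :=
  stmt12_general hk hε10 hε21 ΔD ΔQT P X Xstar hX hXstar S w Δ hw hwsum hcore π1 hJLX hJLXstar Γ hΓ
    hdiam hopt
end

section
/- Let ε1, ε2 ∈ (0,1), k ≥ 1, Δ_D, Δ_QT ≥ 0, let P ⊂ ℝ^d be finite nonempty with |P| = n, let X, X* ⊂ ℝ^d with |X| = |X*| = k, and let π1 : ℝ^d → ℝ^{d'} be a map. Suppose: (i) (1/(1+ε1)²)·cost(P,X) ≤ cost(π1(P),π1(X)) ≤ (1+ε1)²·cost(P,X), and likewise with X* in place of X; (ii) there are S' ⊂ ℝ^{d'} finite nonempty, w : S' → [0,∞) with Σ_{q∈S'} w(q) = n, and Δ ∈ ℝ such that (1−ε2)²·cost(π1(P),Y) ≤ cost((S',0,w),Y) + Δ ≤ (1+ε2)²·cost(π1(P),Y) for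 every finite nonempty Y ⊂ ℝ^{d'} with |Y| ≤ k; (iii) Γ : S' → ℝ^{d'} satisfies ‖q − Γ(q)‖ ≤ Δ_QT for every q ∈ S', and ‖q−y‖ ≤ Δ_D and ‖Γ(q)−y‖ ≤ Δ_D for every q ∈ S' and every y ∈ π1(X) ∪ π1(X*); (iv) X' := π1(X) satisfies cost((Γ(S'),0,w),X') ≤ cost((Γ(S'),0,w),Y) for every finite nonempty Y ⊂ ℝ^{d'} with |Y| ≤ k. Then cost(P,X) ≤ ((1+ε1)^4·(1+ε2)²/(1−ε2)²)·cost(P,X*) + ((1+ε1)²/(1−ε2)²)·4·n·Δ_D·Δ_QT. (Theorem 13, part 4: the quantization-added distributed JL+BKLW algorithm, conditioned on the JL and BKLW events.) -/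
open scoped BigOperators

/-!
Chain the guarantees through the projected space: the JL bound moves `cost(P, X)` to
`cost(π₁(P), π₁(X))`, the coreset bound moves it to the coreset, and quantizing the coreset
points by `Γ` changes each per-point cost by at most `2 Δ_D Δ_QT`, since
`‖q - y‖² - ‖Γ q - y‖² = (‖q - y‖ - ‖Γ q - y‖)(‖q - y‖ + ‖Γ q - y‖)`. Optimality of `π₁(X)` for
the quantized coreset then lets us pass to `π₁(X*)` and walk the same chain back to `cost(P, X*)`.
-/

section ptCost

variable {F : Type*} [NormedAddCommGroup F]

lemma ptCost_le_of_mem {p y : F} {Y : Set F} (hy : y ∈ Y) : ptCost p Y ≤ ‖p - y‖ ^ 2 :=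
  csInf_le ⟨0, by rintro _ ⟨_, _, rfl⟩; positivity⟩ ⟨y, hy, rfl⟩

lemma exists_ptCost_eq (p : F) {Y : Set F} (hne : Y.Nonempty) (hfin : Y.Finite) :
    ∃ y ∈ Y, ptCost p Y = ‖p - y‖ ^ 2 := by
  obtain ⟨y, hy, he⟩ := (hne.image fun y => ‖p - y‖ ^ 2).csInf_mem (hfin.image _)
  exact ⟨y, hy, he.symm⟩

lemma ptCost_le_add_of_norm_sub_le {p p' : F} {Y : Set F} {D δ : ℝ}
    (hne : Y.Nonempty) (hfin : Y.Finite) (hpp' : ‖p - p'‖ ≤ δ)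
    (hp : ∀ y ∈ Y, ‖p - y‖ ≤ D) (hp' : ∀ y ∈ Y, ‖p' - y‖ ≤ D) :
    ptCost p Y ≤ ptCost p' Y + 2 * D * δ := by
  obtain ⟨y, hy, hy_eq⟩ := exists_ptCost_eq p' hne hfin
  have hdiff : |‖p - y‖ - ‖p' - y‖| ≤ δ :=
    (abs_norm_sub_norm_le _ _).trans (by rwa [sub_sub_sub_cancel_right])
  have hsum : ‖p - y‖ + ‖p' - y‖ ≤ 2 * D := by linarith [hp y hy, hp' y hy]
  calc ptCost p Y ≤ ‖p - y‖ ^ 2 := ptCost_le_of_mem hy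
    _ = ‖p' - y‖ ^ 2 + (‖p - y‖ - ‖p' - y‖) * (‖p - y‖ + ‖p' - y‖) := by ring
    _ ≤ ptCost p' Y + 2 * D * δ := by
      rw [hy_eq]
      nlinarith [abs_le.mp hdiff, norm_nonneg (p - y), norm_nonneg (p' - y)]

end ptCost

lemma coresetCost_le_add_of_norm_sub_le {E F : Type*} [NormedAddCommGroup F]
    {S : Finset E} {w : E → ℝ} (hw : ∀ q ∈ S, 0 ≤ w q) (Δ : ℝ) {f g : E → F} {Y : Set F}
    {D δ : ℝ} (hne : Y.Nonempty) (hfin : Y.Finite) (hfg : ∀ q ∈ S, ‖f q - g q‖ ≤ δ)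
    (hf : ∀ q ∈ S, ∀ y ∈ Y, ‖f q - y‖ ≤ D) (hg : ∀ q ∈ S, ∀ y ∈ Y, ‖g q - y‖ ≤ D) :
    coresetCost S Δ w f Y ≤ coresetCost S Δ w g Y + (∑ q ∈ S, w q) * (2 * D * δ) := by
  rw [coresetCost, coresetCost, add_right_comm, Finset.sum_mul, ← Finset.sum_add_distrib]
  gcongr with q hq
  rw [← mul_add]
  exact mul_le_mul_of_nonneg_left
    (ptCost_le_add_of_norm_sub_le hne hfin (hfg q hq) (hf q hq) (hg q hq)) (hw q hq)

lemma projCost_le_of_isMin_quantized_coresetCost {E F : Type*} [NormedAddCommGroup F]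
    {π : E → F} {P : Finset E} {S : Finset F} {w : F → ℝ} (hw : ∀ q ∈ S, 0 ≤ w q)
    {Γ : F → F} {Δ a b D δ : ℝ} {Y Y' : Set F}
    (hne : Y.Nonempty) (hfin : Y.Finite) (hne' : Y'.Nonempty) (hfin' : Y'.Finite)
    (hcoreset : a * projCost π P Y ≤ coresetCost S 0 w id Y + Δ)
    (hcoreset' : coresetCost S 0 w id Y' + Δ ≤ b * projCost π P Y')
    (hΓ : ∀ q ∈ S, ‖q - Γ q‖ ≤ δ)
    (hdiam : ∀ q ∈ S, ∀ y ∈ Y, ‖q - y‖ ≤ D ∧ ‖Γ q - y‖ ≤ D)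
    (hdiam' : ∀ q ∈ S, ∀ y ∈ Y', ‖q - y‖ ≤ D ∧ ‖Γ q - y‖ ≤ D)
    (hopt : coresetCost S 0 w Γ Y ≤ coresetCost S 0 w Γ Y') :
    a * projCost π P Y ≤ b * projCost π P Y' + (∑ q ∈ S, w q) * (4 * D * δ) := by
  have hY := coresetCost_le_add_of_norm_sub_le hw 0 (f := id) hne hfin hΓ
    (fun q hq y hy => (hdiam q hq y hy).1) (fun q hq y hy => (hdiam q hq y hy).2)
  have hY' := coresetCost_le_add_of_norm_sub_le hw 0 (g := id) hne' hfin'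
    (fun q hq => by rw [norm_sub_rev]; exact hΓ q hq)
    (fun q hq y hy => (hdiam' q hq y hy).2) (fun q hq y hy => (hdiam' q hq y hy).1)
  linarith

theorem stmt14_general {d d' k n : ℕ} (hk : 1 ≤ k) {ε1 ε2 : ℝ}
    (hε10 : 0 < ε1) (hε21 : ε2 < 1)
    (ΔD ΔQT : ℝ)
    (P : Finset (Pt d))
    (X Xstar : Finset (Pt d)) (hX : X.card = k) (hXstar : Xstar.card = k)
    (π1 : Pt d → Pt d')
    (hJLX : (1 / (1 + ε1) ^ 2) * kmeansCost P (X : Set (Pt d)) ≤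
        projCost π1 P (π1 '' (X : Set (Pt d))) ∧
      projCost π1 P (π1 '' (X : Set (Pt d))) ≤
        (1 + ε1) ^ 2 * kmeansCost P (X : Set (Pt d)))
    (hJLXstar : (1 / (1 + ε1) ^ 2) * kmeansCost P (Xstar : Set (Pt d)) ≤
        projCost π1 P (π1 '' (Xstar : Set (Pt d))) ∧
      projCost π1 P (π1 '' (Xstar : Set (Pt d))) ≤
        (1 + ε1) ^ 2 * kmeansCost P (Xstar : Set (Pt d)))
    (S' : Finset (Pt d')) (w : Pt d' → ℝ) (Δ : ℝ)
    (hw : ∀ q ∈ S', 0 ≤ w q) (hwsum : (∑ q ∈ S', w q) = (n : ℝ))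
    (hBKLW : ∀ Y : Finset (Pt d'), Y.Nonempty → Y.card ≤ k →
      (1 - ε2) ^ 2 * projCost π1 P (Y : Set (Pt d')) ≤
          coresetCost S' 0 w id (Y : Set (Pt d')) + Δ ∧
      coresetCost S' 0 w id (Y : Set (Pt d')) + Δ ≤
          (1 + ε2) ^ 2 * projCost π1 P (Y : Set (Pt d')))
    (Γ : Pt d' → Pt d')
    (hΓ : ∀ q ∈ S', ‖q - Γ q‖ ≤ ΔQT)
    (hdiam : ∀ q ∈ S', ∀ y ∈ (π1 '' (X : Set (Pt d)) ∪ π1 '' (Xstar : Set (Pt d))),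
      ‖q - y‖ ≤ ΔD ∧ ‖Γ q - y‖ ≤ ΔD)
    (hopt : ∀ Y : Finset (Pt d'), Y.Nonempty → Y.card ≤ k →
      coresetCost S' 0 w Γ (π1 '' (X : Set (Pt d))) ≤
        coresetCost S' 0 w Γ (Y : Set (Pt d'))) :
    kmeansCost P (X : Set (Pt d)) ≤
      ((1 + ε1) ^ 4 * (1 + ε2) ^ 2 / (1 - ε2) ^ 2) * kmeansCost P (Xstar : Set (Pt d)) +
        ((1 + ε1) ^ 2 / (1 - ε2) ^ 2) * (4 * (n : ℝ) * ΔD * ΔQT) := by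
  have hXne : X.Nonempty := Finset.card_pos.mp (by omega)
  have hXsne : Xstar.Nonempty := Finset.card_pos.mp (by omega)
  obtain ⟨hcoreset, -⟩ :=
    hBKLW (X.image π1) (hXne.image π1) (Finset.card_image_le.trans hX.le)
  obtain ⟨-, hcoreset'⟩ :=
    hBKLW (Xstar.image π1) (hXsne.image π1) (Finset.card_image_le.trans hXstar.le)
  have hopt' := hopt (Xstar.image π1) (hXsne.image π1) (Finset.card_image_le.trans hXstar.le)
  simp only [Finset.coe_image] at hcoreset hcoreset' hopt'
  have hproj := projCost_le_of_isMin_quantized_coresetCost hw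
    (hXne.to_set.image π1) (X.finite_toSet.image π1)
    (hXsne.to_set.image π1) (Xstar.finite_toSet.image π1) hcoreset hcoreset' hΓ
    (fun q hq y hy => hdiam q hq y (Set.mem_union_left _ hy))
    (fun q hq y hy => hdiam q hq y (Set.mem_union_right _ hy)) hopt'
  have hc1 : (0 : ℝ) < (1 + ε1) ^ 2 := by positivity
  have hc2 : (0 : ℝ) < (1 - ε2) ^ 2 := pow_pos (sub_pos.mpr hε21) 2
  have hJL : kmeansCost P X ≤ (1 + ε1) ^ 2 * projCost π1 P (π1 '' X) := by
    rw [← inv_mul_le_iff₀ hc1, ← one_div]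
    exact hJLX.1
  rw [hwsum] at hproj
  rw [div_mul_eq_mul_div, div_mul_eq_mul_div, ← add_div, le_div_iff₀ hc2]
  calc kmeansCost P X * (1 - ε2) ^ 2
      ≤ (1 + ε1) ^ 2 * ((1 - ε2) ^ 2 * projCost π1 P (π1 '' X)) := by
        linarith [mul_le_mul_of_nonneg_right hJL hc2.le]
    _ ≤ (1 + ε1) ^ 2 * ((1 + ε2) ^ 2 * ((1 + ε1) ^ 2 * kmeansCost P Xstar)
          + n * (4 * ΔD * ΔQT)) := by
        gcongr
        exact hproj.trans (by gcongr; exact hJLXstar.2)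
    _ = (1 + ε1) ^ 4 * (1 + ε2) ^ 2 * kmeansCost P Xstar
          + (1 + ε1) ^ 2 * (4 * n * ΔD * ΔQT) := by ring

theorem stmt14 {d d' k n : ℕ} (hk : 1 ≤ k) {ε1 ε2 : ℝ}
    (hε10 : 0 < ε1) (hε11 : ε1 < 1) (hε20 : 0 < ε2) (hε21 : ε2 < 1)
    (ΔD ΔQT : ℝ) (hΔD : 0 ≤ ΔD) (hΔQT : 0 ≤ ΔQT)
    (P : Finset (Pt d)) (hP : P.Nonempty) (hn : P.card = n)
    (X Xstar : Finset (Pt d)) (hX : X.card = k) (hXstar : Xstar.card = k)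
    (π1 : Pt d → Pt d')
    (hJLX : (1 / (1 + ε1) ^ 2) * kmeansCost P (X : Set (Pt d)) ≤
        projCost π1 P (π1 '' (X : Set (Pt d))) ∧
      projCost π1 P (π1 '' (X : Set (Pt d))) ≤
        (1 + ε1) ^ 2 * kmeansCost P (X : Set (Pt d)))
    (hJLXstar : (1 / (1 + ε1) ^ 2) * kmeansCost P (Xstar : Set (Pt d)) ≤
        projCost π1 P (π1 '' (Xstar : Set (Pt d))) ∧
      projCost π1 P (π1 '' (Xstar : Set (Pt d))) ≤
        (1 + ε1) ^ 2 * kmeansCost P (Xstar : Set (Pt d)))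
    (S' : Finset (Pt d')) (hS' : S'.Nonempty) (w : Pt d' → ℝ) (Δ : ℝ)
    (hw : ∀ q ∈ S', 0 ≤ w q) (hwsum : (∑ q ∈ S', w q) = (n : ℝ))
    (hBKLW : ∀ Y : Finset (Pt d'), Y.Nonempty → Y.card ≤ k →
      (1 - ε2) ^ 2 * projCost π1 P (Y : Set (Pt d')) ≤
          coresetCost S' 0 w id (Y : Set (Pt d')) + Δ ∧
      coresetCost S' 0 w id (Y : Set (Pt d')) + Δ ≤
          (1 + ε2) ^ 2 * projCost π1 P (Y : Set (Pt d')))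
    (Γ : Pt d' → Pt d')
    (hΓ : ∀ q ∈ S', ‖q - Γ q‖ ≤ ΔQT)
    (hdiam : ∀ q ∈ S', ∀ y ∈ (π1 '' (X : Set (Pt d)) ∪ π1 '' (Xstar : Set (Pt d))),
      ‖q - y‖ ≤ ΔD ∧ ‖Γ q - y‖ ≤ ΔD)
    (hopt : ∀ Y : Finset (Pt d'), Y.Nonempty → Y.card ≤ k →
      coresetCost S' 0 w Γ (π1 '' (X : Set (Pt d))) ≤
        coresetCost S' 0 w Γ (Y : Set (Pt d'))) :
    kmeansCost P (X : Set (Pt d)) ≤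
      ((1 + ε1) ^ 4 * (1 + ε2) ^ 2 / (1 - ε2) ^ 2) * kmeansCost P (Xstar : Set (Pt d)) +
        ((1 + ε1) ^ 2 / (1 - ε2) ^ 2) * (4 * (n : ℝ) * ΔD * ΔQT) :=
  stmt14_general hk hε10 hε21 ΔD ΔQT P X Xstar hX hXstar π1 hJLX hJLXstar S' w Δ hw hwsum hBKLW Γ hΓ
    hdiam hopt
end
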